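/- arXiv:2111.04262 — 7 statements merged into one kernel-verified Lean document; each statement's English description precedes it below -/
import Mathlib

section
/- Let n be a positive integer and k an integer with k ≥ 2. For the path graph P_n on n vertices, CV_k(P_n) = ⌊n/(k+1)⌋. -/
/-!
In `P_n - V'` two surviving vertices lie in the same component exactly when every vertex
between them survives, and then their distance is the difference of their indices. So
`P_n - V'` is in a failure state for `k` iff `V'` meets every run of `k + 1` consecutive
vertices. The `n / (k + 1)` disjoint runs `[(k + 1) i, (k + 1) i + k]` force that many deleted
vertices, and the vertices `c` with `k + 1 ∣ c + 1` meet every run.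
-/

open SimpleGraph

/-- A graph is in a *failure state* for `k` if every connected component has
diameter less than `k`, i.e. every pair of mutually reachable vertices is at
distance less than `k`. -/
def FailureState {V : Type*} (G : SimpleGraph V) (k : ℕ) : Prop :=
  ∀ u v : V, G.Reachable u v → G.dist u v < k

/-- `G` contains `m` pairwise vertex-disjoint paths of length `k`. -/
def HasDisjointPaths {V : Type*} (G : SimpleGraph V) (k m : ℕ) : Prop :=
  ∃ (u v : Fin m → V) (P : ∀ i, G.Walk (u i) (v i)),
    (∀ i, (P i).IsPath ∧ (P i).length = k) ∧
    ∀ i j, i ≠ j → ∀ x, x ∈ (P i).support → x ∉ (P j).support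

/-- The `k`-diameter component vertex connectivity: the minimum size of a set of
vertices whose deletion leaves every component with diameter less than `k`. -/
noncomputable def CV {V : Type*} (G : SimpleGraph V) (k : ℕ) : ℕ :=
  sInf {n | ∃ V' : Finset V, V'.card = n ∧
    FailureState (G.induce ((V' : Set V))ᶜ) k}

/-- The `k`-diameter component edge connectivity: the minimum size of a set of
edges whose deletion leaves every component with diameter less than `k`. -/
noncomputable def CE {V : Type*} (G : SimpleGraph V) (k : ℕ) : ℕ :=
  sInf {n | ∃ E' : Finset (Sym2 V), (E' : Set (Sym2 V)) ⊆ G.edgeSet ∧ E'.card = n ∧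
    FailureState (G.deleteEdges (E' : Set (Sym2 V))) k}

/-- The `k`-diameter component connectivity function: the minimum over all
`p`-element vertex sets `V'` of `CE k (G - V')`. -/
noncomputable def CM {V : Type*} (G : SimpleGraph V) (k p : ℕ) : ℕ :=
  sInf {q | ∃ V' : Finset V, V'.card = p ∧
    CE (G.induce ((V' : Set V))ᶜ) k = q}

def MeetsAllRuns {n : ℕ} (k : ℕ) (t : Set (Fin n)) : Prop :=
  ∀ a : ℕ, a + k < n → ∃ c ∈ t, a ≤ (c : ℕ) ∧ (c : ℕ) ≤ a + k

namespace SimpleGraph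

variable {n : ℕ}

lemma Walk.sub_val_le_length_pathGraph {u v : Fin n} (w : (pathGraph n).Walk u v) :
    (v : ℕ) - u ≤ w.length := by
  induction w with
  | nil => simp
  | cons h _ ih =>
    rw [pathGraph_adj] at h
    rw [Walk.length_cons]
    omega

lemma Walk.mem_support_pathGraph_of_le_of_le {u v : Fin n} (w : (pathGraph n).Walk u v)
    {c : Fin n} (huc : u ≤ c) (hcv : c ≤ v) : c ∈ w.support := by
  induction w with
  | nil => simp [le_antisymm hcv huc]
  | @cons a b _ h _ ih =>
    rw [Walk.support_cons, List.mem_cons]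
    rw [pathGraph_adj] at h
    by_cases hca : c = a
    · exact .inl hca
    · exact .inr (ih (by omega) hcv)

variable {s : Set (Fin n)}

lemma Reachable.mem_of_induce_pathGraph {u v : s} (h : ((pathGraph n).induce s).Reachable u v)
    {c : Fin n} (huc : (u : Fin n) ≤ c) (hcv : c ≤ v) : c ∈ s := by
  obtain ⟨w⟩ := h
  have hc := (w.map (Embedding.induce s).toHom).mem_support_pathGraph_of_le_of_le huc hcv
  rw [Walk.support_map, List.mem_map] at hc
  obtain ⟨x, -, rfl⟩ := hc
  exact x.2

lemma Reachable.sub_val_le_dist_induce_pathGraph {u v : s}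
    (h : ((pathGraph n).induce s).Reachable u v) :
    ((v : Fin n) : ℕ) - (u : Fin n) ≤ ((pathGraph n).induce s).dist u v := by
  obtain ⟨w, hw⟩ := h.exists_walk_length_eq_dist
  rw [← hw, ← Walk.length_map (Embedding.induce s).toHom]
  exact Walk.sub_val_le_length_pathGraph _

lemma exists_walk_induce_pathGraph_length_eq {u v : s} (huv : (u : Fin n) ≤ v)
    (hs : ∀ c : Fin n, (u : Fin n) ≤ c → c ≤ v → c ∈ s) :
    ∃ w : ((pathGraph n).induce s).Walk u v, w.length = (v : ℕ) - (u : Fin n) := by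
  induction hd : ((v : Fin n) : ℕ) - (u : Fin n) generalizing u with
  | zero =>
    obtain rfl : u = v := Subtype.ext (Fin.ext (by omega))
    exact ⟨.nil, rfl⟩
  | succ d ih =>
    let u' : Fin n := ⟨(u : Fin n) + 1, by omega⟩
    have hu_le : (u : Fin n) ≤ u' := Fin.le_def.2 (Nat.le_succ _)
    have hu'_le : u' ≤ v := Fin.le_def.2 (show (u : Fin n).val + 1 ≤ _ by omega)
    have hu' : u' ∈ s := hs u' hu_le hu'_le
    have hadj : ((pathGraph n).induce s).Adj u ⟨u', hu'⟩ := by simp [pathGraph_adj, u']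
    obtain ⟨w, hw⟩ := ih (u := ⟨u', hu'⟩) hu'_le (fun c hc => hs c (hu_le.trans hc))
      (show (v : Fin n).val - ((u : Fin n).val + 1) = d by omega)
    exact ⟨.cons hadj w, by simp [hw]⟩

theorem failureState_induce_pathGraph_iff {n k : ℕ} {s : Set (Fin n)} :
    FailureState ((pathGraph n).induce s) k ↔ MeetsAllRuns k sᶜ := by
  constructor
  · intro hfail a ha
    by_contra! hrun
    have hs (c : Fin n) (h₁ : a ≤ (c : ℕ)) (h₂ : (c : ℕ) ≤ a + k) : c ∈ s := by
      by_contra hc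
      exact (hrun c hc h₁).not_ge h₂
    let u : s := ⟨⟨a, by omega⟩, hs _ le_rfl (Nat.le_add_right a k)⟩
    let v : s := ⟨⟨a + k, ha⟩, hs _ (Nat.le_add_right a k) le_rfl⟩
    obtain ⟨w, -⟩ := exists_walk_induce_pathGraph_length_eq (u := u) (v := v)
      (Fin.le_def.2 (Nat.le_add_right a k)) hs
    have hlt := hfail u v ⟨w⟩
    have hge : a + k - a ≤ ((pathGraph n).induce s).dist u v :=
      Reachable.sub_val_le_dist_induce_pathGraph ⟨w⟩
    omega
  · intro hrun u v huv
    wlog h : (u : Fin n) ≤ v generalizing u v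
    · rw [dist_comm]
      exact this v u huv.symm (le_of_not_ge h)
    have hs := fun c => huv.mem_of_induce_pathGraph (c := c)
    obtain ⟨w, hw⟩ := exists_walk_induce_pathGraph_length_eq h hs
    have hlt : ((v : Fin n) : ℕ) < (u : Fin n) + k := by
      by_contra! hle
      obtain ⟨c, hc, h₁, h₂⟩ := hrun (u : Fin n) (by omega)
      exact hc (hs c (Fin.le_def.2 h₁) (Fin.le_def.2 (by omega)))
    calc ((pathGraph n).induce s).dist u v ≤ w.length := dist_le w
      _ < k := by omega

end SimpleGraph

open Finset

theorem div_le_card_of_meetsAllRuns {n k : ℕ} {t : Finset (Fin n)}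
    (h : MeetsAllRuns k (t : Set (Fin n))) : n / (k + 1) ≤ #t := by
  have hrange : range (n / (k + 1)) ⊆ t.image fun c : Fin n => (c : ℕ) / (k + 1) := by
    intro i hi
    have hi : (i + 1) * (k + 1) ≤ n := (Nat.le_div_iff_mul_le k.succ_pos).1 (mem_range.1 hi)
    obtain ⟨c, hc, h₁, h₂⟩ := h ((k + 1) * i) (by nlinarith)
    refine mem_image.2 ⟨c, hc, Nat.div_eq_of_lt_le ?_ ?_⟩ <;> nlinarith
  calc n / (k + 1) = #(range (n / (k + 1))) := (card_range _).symm
    _ ≤ #(t.image fun c : Fin n => (c : ℕ) / (k + 1)) := card_le_card hrange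
    _ ≤ #t := card_image_le

theorem meetsAllRuns_filter_dvd_succ {n k : ℕ} :
    MeetsAllRuns k (({c : Fin n | k + 1 ∣ (c : ℕ) + 1} : Finset (Fin n)) : Set (Fin n)) := by
  intro a ha
  have hdiv := Nat.div_add_mod a (k + 1)
  have hmod := Nat.mod_lt a (show 0 < k + 1 by omega)
  refine ⟨⟨(k + 1) * (a / (k + 1)) + k, by omega⟩, ?_, ?_, ?_⟩
  · simp only [coe_filter, mem_univ, true_and, Set.mem_ofPred_eq]
    exact ⟨a / (k + 1) + 1, by ring⟩
  all_goals rw [Fin.val_mk]; omega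

theorem card_filter_dvd_succ (n k : ℕ) :
    #{c : Fin n | k + 1 ∣ (c : ℕ) + 1} = n / (k + 1) := by
  rw [← Nat.card_multiples, ← card_map Fin.valEmbedding]
  congr 1
  ext e
  simp only [mem_map, mem_filter, mem_univ, true_and, mem_range, Fin.valEmbedding_apply]
  exact ⟨fun ⟨c, hc, he⟩ => he ▸ ⟨c.isLt, hc⟩, fun ⟨he, hd⟩ => ⟨⟨e, he⟩, hd, rfl⟩⟩

theorem CV_pathGraph_general (n k : ℕ) :
    CV (SimpleGraph.pathGraph n) k = n / (k + 1) := by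
  have hfail (V' : Finset (Fin n)) :
      FailureState ((pathGraph n).induce (V' : Set (Fin n))ᶜ) k ↔
        MeetsAllRuns k (V' : Set (Fin n)) := by
    rw [failureState_induce_pathGraph_iff, compl_compl]
  refine IsLeast.csInf_eq
    ⟨⟨_, card_filter_dvd_succ n k, (hfail _).2 meetsAllRuns_filter_dvd_succ⟩, ?_⟩
  rintro _ ⟨V', rfl, hV'⟩
  exact div_le_card_of_meetsAllRuns ((hfail V').1 hV')

/-- For the path graph on `n` vertices,
`CV k (P n) = ⌊n / (k + 1)⌋`. -/
theorem CV_pathGraph (n k : ℕ) (hn : 0 < n) (hk : 2 ≤ k) :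
    CV (SimpleGraph.pathGraph n) k = n / (k + 1) :=
  CV_pathGraph_general n k
end

section
/- Let n ≥ 3 be an integer and k an integer with k ≥ 2. For the cycle graph C_n on n vertices: if k > ⌊n/2⌋ then CV_k(C_n) = 0, and if k ≤ ⌊n/2⌋ then CV_k(C_n) = ⌊(n+k)/(k+1)⌋. -/
open SimpleGraph

/-! Deleting the vertices whose index is a multiple of `k + 1` cuts `C_n` into arcs of at most `k`
vertices, at the cost of `⌈n / (k + 1)⌉ = ⌊(n + k) / (k + 1)⌋` deletions. Conversely, if fewer
vertices `W` are deleted, the translates `W - {0, …, k}` cannot cover `C_n`, so some window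
`p, p + 1, …, p + k` survives; it joins `p` to `p + k`, which are at distance `k` already in `C_n`
because `2k ≤ n`. For `k > ⌊n / 2⌋` nothing has to be deleted, since `C_n` has diameter
`⌊n / 2⌋`. -/

open Finset Fin.NatCast Fin.CommRing
open scoped Pointwise

lemma Nat.not_dvd_of_div_eq {q a b c : ℕ} (ha : ¬ q ∣ a) (hab : a / q = b / q) (hac : a ≤ c)
    (hcb : c ≤ b) : ¬ q ∣ c := by
  intro hc
  have hca : c / q = a / q :=
    le_antisymm (hab ▸ Nat.div_le_div_right hcb) (Nat.div_le_div_right hac)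
  have hc' := Nat.div_mul_cancel hc
  have ha' := Nat.div_mul_le_self a q
  rw [hca] at hc'
  exact ha (show a = c by omega ▸ hc)

lemma Nat.sub_lt_of_div_eq {k a b : ℕ} (ha : ¬ (k + 1) ∣ a) (hab : a / (k + 1) = b / (k + 1)) :
    b - a < k := by
  have ha' := Nat.div_add_mod a (k + 1)
  have hb' := Nat.div_add_mod b (k + 1)
  have hmod : a % (k + 1) ≠ 0 := fun h => ha (Nat.dvd_of_mod_eq_zero h)
  have := Nat.mod_lt a (Nat.add_one_pos k)
  have := Nat.mod_lt b (Nat.add_one_pos k)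
  rw [hab] at ha'
  generalize (k + 1) * (b / (k + 1)) = m, a % (k + 1) = r, b % (k + 1) = r' at *
  omega

lemma Fin.card_filter_dvd_val (n k : ℕ) : #{x : Fin n | (k + 1) ∣ x.val} = (n + k) / (k + 1) := by
  have hcount : #{x : Fin n | (k + 1) ∣ x.val} = n.count ((k + 1) ∣ ·) := by
    rw [Nat.count_eq_card_filter_range]
    exact card_bij (fun x _ => x.val) (by simp) (by simp [Fin.ext_iff])
      fun b hb => ⟨⟨b, mem_range.1 (mem_filter.1 hb).1⟩, by simpa using (mem_filter.1 hb).2, rfl⟩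
  rcases n with _ | n
  · simp [Nat.div_eq_of_lt]
  · rw [hcount, Nat.count_succ', Nat.count_eq_card_filter_range, Nat.card_multiples,
      show n + 1 + k = n + (k + 1) by ring, Nat.add_div_right _ k.succ_pos]
    simp

lemma Fin.val_add_one_div_eq {n q : ℕ} [NeZero n] {x : Fin n} (h : ¬ q ∣ (x + 1).val) :
    (x + 1).val / q = x.val / q := by
  obtain ⟨m, rfl⟩ := Nat.exists_eq_succ_of_ne_zero (NeZero.ne n)
  rw [Fin.val_add_one] at h ⊢
  split_ifs at h ⊢
  · exact absurd (dvd_zero q) h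
  · rw [Nat.succ_div, if_neg h, add_zero]

-- `min a.val (-a).val` is the length of the shorter arc from `0` to `a` around the cycle.
lemma Fin.min_val_add_one_le {n : ℕ} [NeZero n] (a : Fin n) :
    min (a + 1).val (-(a + 1)).val ≤ min a.val (-a).val + 1 := by
  obtain ⟨m, rfl⟩ := Nat.exists_eq_succ_of_ne_zero (NeZero.ne n)
  rw [Fin.val_neg, Fin.val_neg, Fin.val_add_one]
  split_ifs <;> simp only [Fin.ext_iff, Fin.val_last, Fin.val_zero, Fin.val_add_one] at * <;> omega

lemma Finset.exists_add_notMem_of_card_mul_lt {A : Type*} [AddGroup A] [Fintype A] [DecidableEq A]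
    (S D : Finset A) (h : #S * #D < Fintype.card A) : ∃ p, ∀ d ∈ D, p + d ∉ S := by
  by_contra! hbad
  have hcover : (univ : Finset A) ⊆ S - D := fun p _ => by
    obtain ⟨d, hd, hpd⟩ := hbad p
    exact mem_sub.2 ⟨p + d, hpd, d, hd, add_sub_cancel_right p d⟩
  have := card_le_card hcover
  have := card_sub_le (s := S) (t := D)
  rw [card_univ] at *
  omega

namespace SimpleGraph

variable {V W : Type*} {G : SimpleGraph V}

lemma Reachable.dist_map_le {G' : SimpleGraph W} (f : G →g G') {u v : V} (h : G.Reachable u v) :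
    G'.dist (f u) (f v) ≤ G.dist u v := by
  obtain ⟨p, hp⟩ := h.exists_walk_length_eq_dist
  simpa [hp] using dist_le (p.map f)

lemma Walk.length_induce (s : Set V) {u v : V} (w : G.Walk u v) (hw : ∀ x ∈ w.support, x ∈ s) :
    (w.induce s hw).length = w.length :=
  (Walk.length_map (Embedding.induce s).toHom (w.induce s hw)).symm.trans
    (congrArg Walk.length (w.map_induce hw))

lemma Walk.dist_induce_le (s : Set V) {u v : V} (w : G.Walk u v) (hw : ∀ x ∈ w.support, x ∈ s) :
    (G.induce s).dist ⟨u, hw u w.start_mem_support⟩ ⟨v, hw v w.end_mem_support⟩ ≤ w.length :=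
  w.length_induce s hw ▸ dist_le _

lemma Reachable.dist_le_dist_induce {s : Set V} {u v : s} (h : (G.induce s).Reachable u v) :
    G.dist u v ≤ (G.induce s).dist u v :=
  h.dist_map_le (Embedding.induce s).toHom

end SimpleGraph

lemma FailureState.induce_of_forall_mem {V : Type*} {G : SimpleGraph V} {k : ℕ} {s : Set V}
    (hs : ∀ x, x ∈ s) (h : FailureState G k) : FailureState (G.induce s) k := by
  intro u v huv
  have hG := huv.map (Embedding.induce s).toHom
  obtain ⟨w, hw⟩ := hG.exists_walk_length_eq_dist
  exact (w.dist_induce_le s fun x _ => hs x).trans_lt (hw ▸ h _ _ hG)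

lemma CV_eq_card_of_forall_card_le {V : Type*} {G : SimpleGraph V} {k : ℕ} (S : Finset V)
    (hS : FailureState (G.induce (S : Set V)ᶜ) k)
    (hmin : ∀ T : Finset V, FailureState (G.induce (T : Set V)ᶜ) k → #S ≤ #T) : CV G k = #S :=
  IsLeast.csInf_eq ⟨⟨S, rfl, hS⟩, by rintro _ ⟨T, rfl, hT⟩; exact hmin T hT⟩

namespace SimpleGraph

variable {n : ℕ} [NeZero n]

lemma cycleGraph_adj_iff (hn : 1 < n) {u v : Fin n} :
    (cycleGraph n).Adj u v ↔ v = u + 1 ∨ u = v + 1 := by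
  have h1 : (1 : Fin n).val = 1 := by rw [Fin.val_one', Nat.mod_eq_of_lt hn]
  rw [cycleGraph_adj', ← h1, ← Fin.ext_iff, ← Fin.ext_iff, sub_eq_iff_eq_add', sub_eq_iff_eq_add',
    or_comm]

lemma cycleGraph.exists_walk_add (hn : 1 < n) (u : Fin n) (d : ℕ) :
    ∃ w : (cycleGraph n).Walk u (u + d), w.length = d ∧ ∀ x ∈ w.support, ∃ j ≤ d, x = u + j := by
  induction d with
  | zero => exact ⟨Walk.nil.copy rfl (by simp), by simp, by simp⟩
  | succ d ih =>
    obtain ⟨w, hlen, hsupp⟩ := ih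
    have hadj : (cycleGraph n).Adj (u + d) (u + (d + 1 : ℕ)) :=
      (cycleGraph_adj_iff hn).2 (Or.inl (by push_cast; ring))
    refine ⟨w.concat hadj, by simp [hlen], fun x hx => ?_⟩
    rcases List.mem_append.1 (w.support_concat hadj ▸ hx) with hx | hx
    · obtain ⟨j, hj, rfl⟩ := hsupp x hx
      exact ⟨j, by omega, rfl⟩
    · exact ⟨d + 1, le_rfl, List.mem_singleton.1 hx⟩

lemma cycleGraph.exists_walk_induce_of_forall_add_mem (hn : 1 < n) {s : Set (Fin n)} (u v : s)
    (h : ∀ j ≤ (v.1 - u.1).val, u.1 + (j : Fin n) ∈ s) :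
    ∃ w : ((cycleGraph n).induce s).Walk u v, w.length = (v.1 - u.1).val := by
  obtain ⟨w, hw, hsupp⟩ := exists_walk_add hn u.1 (v.1 - u.1).val
  have hv : u.1 + ((v.1 - u.1).val : Fin n) = v.1 := by rw [Fin.cast_val_eq_self]; ring
  have hws : ∀ x ∈ (w.copy rfl hv).support, x ∈ s := by
    rw [Walk.support_copy]
    intro x hx
    obtain ⟨j, hj, rfl⟩ := hsupp x hx
    exact h j hj
  exact ⟨(w.copy rfl hv).induce s hws, by rw [Walk.length_induce, Walk.length_copy, hw]⟩

lemma cycleGraph.min_val_sub_le_length (hn : 1 < n) {u v : Fin n} (w : (cycleGraph n).Walk u v) :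
    min (v - u).val (u - v).val ≤ w.length := by
  induction w with
  | nil => simp
  | @cons u x v hadj w ih =>
    rw [Walk.length_cons]
    rcases (cycleGraph_adj_iff hn).1 hadj with rfl | rfl
    · have step := Fin.min_val_add_one_le (v - (u + 1))
      rw [show v - (u + 1) + 1 = v - u by ring, neg_sub, neg_sub] at step
      omega
    · have step := Fin.min_val_add_one_le (x - v)
      rw [show x - v + 1 = x + 1 - v by ring, neg_sub, neg_sub] at step
      omega

lemma cycleGraph_dist_le_val_sub (hn : 1 < n) (u v : Fin n) :
    (cycleGraph n).dist u v ≤ (v - u).val := by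
  obtain ⟨w, hw, -⟩ := cycleGraph.exists_walk_add hn u (v - u).val
  have hv : u + ((v - u).val : Fin n) = v := by rw [Fin.cast_val_eq_self]; ring
  calc (cycleGraph n).dist u v = (cycleGraph n).dist u (u + ((v - u).val : Fin n)) := by rw [hv]
    _ ≤ w.length := dist_le w
    _ = (v - u).val := hw

lemma cycleGraph_dist (hn : 1 < n) (u v : Fin n) :
    (cycleGraph n).dist u v = min (v - u).val (u - v).val := by
  refine le_antisymm (le_min (cycleGraph_dist_le_val_sub hn u v) ?_) ?_
  · exact dist_comm (G := cycleGraph n) ▸ cycleGraph_dist_le_val_sub hn v u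
  · obtain ⟨w, hw⟩ := (cycleGraph_preconnected u v).exists_walk_length_eq_dist
    exact hw ▸ cycleGraph.min_val_sub_le_length hn w

lemma cycleGraph_dist_le_half (hn : 1 < n) (u v : Fin n) : (cycleGraph n).dist u v ≤ n / 2 := by
  rw [cycleGraph_dist hn, ← neg_sub v u, Fin.val_neg]
  split_ifs <;> omega

lemma cycleGraph_dist_add_natCast (hn : 1 < n) (u : Fin n) {k : ℕ} (hk : 2 * k ≤ n) :
    (cycleGraph n).dist u (u + k) = k := by
  have hkn : k % n = k := Nat.mod_eq_of_lt (by omega)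
  rw [cycleGraph_dist hn, add_sub_cancel_left, sub_add_cancel_left, Fin.val_neg]
  simp only [Fin.ext_iff, Fin.val_natCast, Fin.val_zero, hkn]
  split_ifs <;> omega

lemma cycleGraph_failureState_of_half_lt (hn : 1 < n) {k : ℕ} (hk : n / 2 < k) :
    FailureState (cycleGraph n) k :=
  fun u v _ => (cycleGraph_dist_le_half hn u v).trans_lt hk

lemma cycleGraph.val_div_eq_of_reachable_induce (hn : 1 < n) {q : ℕ} {s : Set (Fin n)}
    (hs : ∀ x ∈ s, ¬ q ∣ x.val) {u v : s} (h : ((cycleGraph n).induce s).Reachable u v) :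
    u.1.val / q = v.1.val / q := by
  obtain ⟨w⟩ := h
  induction w with
  | nil => rfl
  | @cons u x v hadj w ih =>
    refine Eq.trans ?_ ih
    have hx := hs _ x.2
    have hu := hs _ u.2
    rcases (cycleGraph_adj_iff hn).1 (induce_adj.1 hadj) with h | h
    · rw [h] at hx ⊢
      exact (Fin.val_add_one_div_eq hx).symm
    · rw [h] at hu ⊢
      exact Fin.val_add_one_div_eq hu

lemma cycleGraph_failureState_induce_compl_dvd (hn : 1 < n) (k : ℕ) :
    FailureState
      ((cycleGraph n).induce ((({x | (k + 1) ∣ x.val} : Finset (Fin n)) : Set (Fin n)))ᶜ) k := by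
  set s : Set (Fin n) := (({x | (k + 1) ∣ x.val} : Finset (Fin n)) : Set (Fin n))ᶜ
  have hs : ∀ x, x ∈ s ↔ ¬ (k + 1) ∣ x.val := by simp [s]
  intro u v huv
  wlog hle : u.1 ≤ v.1 generalizing u v
  · rw [dist_comm]
    exact this v u huv.symm (le_of_not_ge hle)
  have hdiv := cycleGraph.val_div_eq_of_reachable_induce hn (fun x hx => (hs x).1 hx) huv
  have hsub : (v.1 - u.1).val = v.1.val - u.1.val := Fin.sub_val_of_le hle
  have hu := (hs u).1 u.2
  have hvn := v.1.isLt
  obtain ⟨w, hw⟩ := cycleGraph.exists_walk_induce_of_forall_add_mem hn u v fun j hj => by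
    have hval : (u.1 + (j : Fin n)).val = u.1.val + j := by
      rw [Fin.val_add, Fin.val_natCast, Nat.mod_eq_of_lt (show j < n by omega),
        Nat.mod_eq_of_lt (by omega)]
    exact (hs _).2 (hval ▸ Nat.not_dvd_of_div_eq hu hdiv (by omega) (by omega))
  have := Nat.sub_lt_of_div_eq hu hdiv
  have := dist_le w
  omega

lemma cycleGraph_card_le_of_failureState (hn : 1 < n) {k : ℕ} (hk : 2 * k ≤ n)
    (S : Finset (Fin n)) (h : FailureState ((cycleGraph n).induce (S : Set (Fin n))ᶜ) k) :
    (n + k) / (k + 1) ≤ #S := by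
  by_contra! hlt
  have hsmall : #S * (k + 1) < n := by
    have := (Nat.le_div_iff_mul_le (Nat.add_one_pos k)).1 hlt
    nlinarith
  let D : Finset (Fin n) := (range (k + 1)).image (fun j : ℕ => (j : Fin n))
  have hD : #S * #D < Fintype.card (Fin n) := by
    calc #S * #D ≤ #S * (k + 1) := Nat.mul_le_mul_left _ (card_image_le.trans (card_range _).le)
      _ < Fintype.card (Fin n) := by rwa [Fintype.card_fin]
  obtain ⟨p, hp⟩ := exists_add_notMem_of_card_mul_lt S D hD
  have hwindow : ∀ j ≤ k, p + (j : Fin n) ∈ (S : Set (Fin n))ᶜ :=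
    fun j hj => hp _ (mem_image_of_mem _ (mem_range.2 (by omega)))
  let u : ↥(S : Set (Fin n))ᶜ := ⟨p, by simpa using hwindow 0 (Nat.zero_le k)⟩
  let v : ↥(S : Set (Fin n))ᶜ := ⟨p + k, hwindow k le_rfl⟩
  have hvu : (v.1 - u.1).val = k := by
    simp [u, v, Nat.mod_eq_of_lt (show k < n by omega)]
  obtain ⟨w, -⟩ := cycleGraph.exists_walk_induce_of_forall_add_mem hn u v (hvu ▸ hwindow)
  have hlt := h u v ⟨w⟩
  have hle := Reachable.dist_le_dist_induce ⟨w⟩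
  rw [show (u : Fin n) = p from rfl, show (v : Fin n) = p + k from rfl,
    cycleGraph_dist_add_natCast hn p hk] at hle
  omega

end SimpleGraph

theorem CV_cycleGraph_general (n k : ℕ) (hn : 3 ≤ n) :
    (n / 2 < k → CV (SimpleGraph.cycleGraph n) k = 0) ∧
    (k ≤ n / 2 → CV (SimpleGraph.cycleGraph n) k = (n + k) / (k + 1)) := by
  have : NeZero n := ⟨by omega⟩
  have hn' : 1 < n := by omega
  refine ⟨fun hk => ?_, fun hk => ?_⟩
  · exact CV_eq_card_of_forall_card_le ∅
      ((cycleGraph_failureState_of_half_lt hn' hk).induce_of_forall_mem (by simp))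
      fun _ _ => Nat.zero_le _
  · rw [← Fin.card_filter_dvd_val n k]
    refine CV_eq_card_of_forall_card_le _ (cycleGraph_failureState_induce_compl_dvd hn' k) ?_
    exact fun T hT => Fin.card_filter_dvd_val n k ▸
      cycleGraph_card_le_of_failureState hn' (by omega) T hT

/-- For the cycle graph on `n ≥ 3` vertices: `CV k (C n) = 0`
if `k > ⌊n / 2⌋`, and `CV k (C n) = ⌊(n + k) / (k + 1)⌋` if `k ≤ ⌊n / 2⌋`. -/
theorem CV_cycleGraph (n k : ℕ) (hn : 3 ≤ n) (hk : 2 ≤ k) :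
    (n / 2 < k → CV (SimpleGraph.cycleGraph n) k = 0) ∧
    (k ≤ n / 2 → CV (SimpleGraph.cycleGraph n) k = (n + k) / (k + 1)) :=
  CV_cycleGraph_general n k hn
end

section
/- Let a and b be positive integers with max{a,b} ≥ 2, and let k = 2. For the complete bipartite graph K_{a,b}, CV_2(K_{a,b}) = min{a,b}. -/
open SimpleGraph

open Finset

/-
Deleting one whole side of `K_{a,b}` leaves an edgeless graph, so `CV_2 ≤ min a b`.
Conversely, if fewer than `min a b` vertices are deleted, both sides keep a vertex and
more than `max a b ≥ 2` vertices survive; a third survivor lies on the side of one of the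
first two, and these two are at distance `2` through the survivor on the other side.
-/

theorem CV_eq_card {V : Type*} {G : SimpleGraph V} {k : ℕ} (s : Finset V)
    (hs : FailureState (G.induce (s : Set V)ᶜ) k)
    (hmin : ∀ t : Finset V, #t < #s → ¬ FailureState (G.induce (t : Set V)ᶜ) k) :
    CV G k = #s :=
  IsLeast.csInf_eq ⟨⟨s, rfl, hs⟩, by
    rintro _ ⟨t, rfl, ht⟩
    exact not_lt.mp fun hlt => hmin t hlt ht⟩

theorem failureState_of_forall_not_adj {V : Type*} {G : SimpleGraph V} {k : ℕ} (hk : 0 < k)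
    (h : ∀ u v, ¬ G.Adj u v) : FailureState G k := by
  obtain rfl := eq_bot_iff_forall_not_adj.mpr h
  exact fun _ _ _ => dist_bot ▸ hk

theorem not_failureState_two_of_adj_of_adj {V : Type*} {G : SimpleGraph V} {u v w : V}
    (hne : u ≠ v) (hnadj : ¬ G.Adj u v) (huw : G.Adj u w) (hwv : G.Adj w v) :
    ¬ FailureState G 2 := by
  intro hG
  have hreach : G.Reachable u v := huw.reachable.trans hwv.reachable
  have h0 : G.dist u v ≠ 0 := dist_ne_zero_iff_ne_and_reachable.mpr ⟨hne, hreach⟩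
  have h1 : G.dist u v ≠ 1 := fun h => hnadj (dist_eq_one_iff_adj.mp h)
  have := hG u v hreach
  omega

section completeBipartiteGraph

variable {α β : Type*}

theorem failureState_induce_compl_completeBipartiteGraph {k : ℕ} (hk : 0 < k)
    {s : Set (α ⊕ β)} (hs : (∀ x, .inl x ∈ s) ∨ ∀ y, .inr y ∈ s) :
    FailureState ((completeBipartiteGraph α β).induce sᶜ) k := by
  refine failureState_of_forall_not_adj hk ?_
  rintro ⟨u, hu⟩ ⟨v, hv⟩ huv
  rw [Set.mem_compl_iff] at hu hv
  rcases hs with hs | hs <;> rcases u with u | u <;> rcases v with v | v <;> simp_all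

theorem not_failureState_induce_completeBipartiteGraph {S : Set (α ⊕ β)} {x : α} {y : β}
    {z : α ⊕ β} (hx : .inl x ∈ S) (hy : .inr y ∈ S) (hz : z ∈ S)
    (hzx : z ≠ .inl x) (hzy : z ≠ .inr y) :
    ¬ FailureState ((completeBipartiteGraph α β).induce S) 2 := by
  rcases z with z | z
  · exact not_failureState_two_of_adj_of_adj (u := ⟨_, hz⟩) (v := ⟨_, hx⟩) (w := ⟨_, hy⟩)
      (by simpa using hzx) (by simp) (by simp) (by simp)
  · exact not_failureState_two_of_adj_of_adj (u := ⟨_, hz⟩) (v := ⟨_, hy⟩) (w := ⟨_, hx⟩)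
      (by simpa using hzy) (by simp) (by simp) (by simp)

variable [Fintype α] [Fintype β]

theorem exists_three_notMem_of_card_lt_min [DecidableEq α] [DecidableEq β]
    {s : Finset (α ⊕ β)} (hs : #s < min (Fintype.card α) (Fintype.card β))
    (hmax : 2 ≤ max (Fintype.card α) (Fintype.card β)) :
    ∃ x y z, .inl x ∉ s ∧ .inr y ∉ s ∧ z ∉ s ∧ z ≠ .inl x ∧ z ≠ .inr y := by
  have hsplit := card_toLeft_add_card_toRight (u := s)
  obtain ⟨x, -, hx⟩ := exists_mem_notMem_of_card_lt_card (s := s.toLeft) (t := univ)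
    (by rw [card_univ]; omega)
  obtain ⟨y, -, hy⟩ := exists_mem_notMem_of_card_lt_card (s := s.toRight) (t := univ)
    (by rw [card_univ]; omega)
  obtain ⟨z, hz⟩ : (sᶜ \ {.inl x, .inr y}).Nonempty := by
    have hcompl : #sᶜ = Fintype.card α + Fintype.card β - #s := by
      rw [card_compl, Fintype.card_sum]
    have hsdiff := le_card_sdiff {.inl x, .inr y} sᶜ
    have hpair := card_le_two (a := (.inl x : α ⊕ β)) (b := .inr y)
    rw [← card_pos]
    omega
  simp only [mem_sdiff, mem_compl, mem_insert, mem_singleton, not_or] at hz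
  exact ⟨x, y, z, mem_toLeft.not.mp hx, mem_toRight.not.mp hy, hz.1, hz.2⟩

end completeBipartiteGraph

theorem CV_completeBipartite_two_general (a b : ℕ)
    (hab : 2 ≤ max a b) :
    CV (completeBipartiteGraph (Fin a) (Fin b)) 2 = min a b := by
  obtain ⟨s, hs_card, hs_side⟩ : ∃ s : Finset (Fin a ⊕ Fin b),
      #s = min a b ∧ ((∀ x, .inl x ∈ s) ∨ ∀ y, .inr y ∈ s) := by
    rcases le_total a b with h | h
    · exact ⟨univ.map .inl, by simp [h], .inl (by simp)⟩
    · exact ⟨univ.map .inr, by simp [h], .inr (by simp)⟩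
  rw [← hs_card]
  refine CV_eq_card s (failureState_induce_compl_completeBipartiteGraph two_pos
    (by simpa using hs_side)) fun t ht => ?_
  obtain ⟨x, y, z, hx, hy, hz, hzx, hzy⟩ :=
    exists_three_notMem_of_card_lt_min (s := t) (by simpa [hs_card] using ht) (by simpa using hab)
  exact not_failureState_induce_completeBipartiteGraph (S := (t : Set _)ᶜ)
    (by simpa using hx) (by simpa using hy) (by simpa using hz) hzx hzy

/-- For the complete bipartite graph with part sizes
`a, b ≥ 1` and `max a b ≥ 2`, `CV 2 (K a b) = min a b`. -/
theorem CV_completeBipartite_two (a b : ℕ) (ha : 0 < a) (hb : 0 < b)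
    (hab : 2 ≤ max a b) :
    CV (completeBipartiteGraph (Fin a) (Fin b)) 2 = min a b :=
  CV_completeBipartite_two_general a b hab
end

section
/- Let r ≥ 2, l ≥ 1, and k ≥ 2 be integers, and let T_{r,l} be the perfect r-ary tree of height l with levels numbered 1 (leaves) through l+1 (root). Let V' be the set of all vertices of T_{r,l} lying on a level that is an integer multiple of ⌈k/2⌉+1. Then every connected component of T_{r,l} − V' is a perfect r-ary tree of height at most ⌈k/2⌉−1; in particular every component of T_{r,l} − V' has diameter at most k−1, so T_{r,l} − V' is in a failure state for k. -/
open SimpleGraph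

/-- Vertices of the perfect `r`-ary tree of height `l`: words over `Fin r` of
length at most `l`. The root is the empty word, a vertex at depth `d` is a word
of length `d`, and the leaves are the words of length `l`. -/
def RAryVert (r l : ℕ) : Type := {ws : List (Fin r) // ws.length ≤ l}

/-- The perfect `r`-ary tree of height `l`: two vertices are adjacent iff one is
the parent of the other, i.e. one word is obtained from the other by removing
its head letter. -/
def raryTree (r l : ℕ) : SimpleGraph (RAryVert r l) where
  Adj u v := (∃ a : Fin r, (u.val : List (Fin r)) = a :: v.val) ∨
             (∃ a : Fin r, (v.val : List (Fin r)) = a :: u.val)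
  symm := by
    constructor
    intro u v h
    tauto
  loopless := by
    constructor
    intro u h
    rcases h with ⟨a, h⟩ | ⟨a, h⟩ <;>
      · apply_fun List.length at h
        simp at h

/-- The level of a vertex of `RAryVert r l`: leaves are on level `1` and the
root is on level `l + 1`. -/
def level {r l : ℕ} (w : RAryVert r l) : ℕ := l + 1 - w.val.length

/-!
Put `m = h + 1`. A surviving vertex `u` has level `m * B + s` with `1 ≤ s ≤ h`, where
`B = level u / m`; its parent survives iff `s < h`, so in the pruned tree `u` climbs exactly
to its ancestor on level `min (m * B + h) (l + 1)` and no further. Hence the component of `u`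
consists of the words `p ++ ρ`, with `ρ` that ancestor and `p` of length less than
`min h (l + 1 - m * B)`, and `p ↦ p ++ ρ` is an isomorphism from a perfect `r`-ary tree of
height at most `h - 1` onto it. Any two of its vertices are joined through `ρ`, so their
distance is at most `2 * (h - 1) ≤ k - 1`.
-/

lemma SimpleGraph.Reachable.apply_eq_of_forall_adj {V α : Type*} {G : SimpleGraph V}
    {f : V → α} (hf : ∀ ⦃x y⦄, G.Adj x y → f x = f y) {u v : V} (huv : G.Reachable u v) :
    f u = f v := by
  obtain ⟨p⟩ := huv
  induction p with
  | nil => rfl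
  | cons hxy _ ih => exact (hf hxy).trans ih

def SimpleGraph.Embedding.codRestrict {V W : Type*} {G : SimpleGraph V} {G' : SimpleGraph W}
    (f : G ↪g G') (s : Set W) (hs : ∀ v, f v ∈ s) : G ↪g G'.induce s where
  toFun v := ⟨f v, hs v⟩
  inj' _ _ h := f.injective (congrArg Subtype.val h)
  map_rel_iff' := f.map_adj_iff

def subtreeEmbedding {r l H : ℕ} (ρ : List (Fin r)) (hH : H + ρ.length ≤ l) :
    raryTree r H ↪g raryTree r l where
  toFun p := ⟨p.val ++ ρ, by have := p.2; simp only [List.length_append]; omega⟩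
  inj' _ _ hpq := Subtype.ext (List.append_cancel_right (congrArg Subtype.val hpq))
  map_rel_iff' {p q} := by
    change (∃ a, p.val ++ ρ = a :: (q.val ++ ρ)) ∨ (∃ a, q.val ++ ρ = a :: (p.val ++ ρ)) ↔
      (raryTree r H).Adj p q
    simp only [← List.cons_append, List.append_left_inj]
    rfl

namespace RAryVert

variable {r l : ℕ}

lemma level_add_length (u : RAryVert r l) : level u + u.val.length = l + 1 := by
  have := u.2; unfold level; omega

lemma level_of_cons {u v : RAryVert r l} {a : Fin r} (huv : u.val = a :: v.val) :
    level v = level u + 1 := by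
  have hu := level_add_length u
  have hv := level_add_length v
  rw [huv, List.length_cons] at hu
  omega

lemma exists_eq_cons_of_level_le {u : RAryVert r l} (hu : level u ≤ l) :
    ∃ (a : Fin r) (v : RAryVert r l), u.val = a :: v.val := by
  have hlen := level_add_length u
  obtain ⟨a, t, hat⟩ := List.exists_cons_of_ne_nil (l := u.val) fun hnil => by
    rw [hnil, List.length_nil] at hlen
    omega
  refine ⟨a, ⟨t, ?_⟩, hat⟩
  have := u.2
  rw [hat, List.length_cons] at this
  omega

def ancestor (u : RAryVert r l) (n : ℕ) : RAryVert r l :=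
  ⟨u.val.drop n, by have := u.2; simp only [List.length_drop]; omega⟩

lemma level_ancestor (u : RAryVert r l) {n : ℕ} (hn : n ≤ u.val.length) :
    level (u.ancestor n) = level u + n := by
  have hu := level_add_length u
  have ha := level_add_length (u.ancestor n)
  rw [show (u.ancestor n).val = u.val.drop n from rfl, List.length_drop] at ha
  omega

variable (h : ℕ)

/-- The surviving levels `m * B + 1, …, m * B + h` (with `m = h + 1`) form block `B`. -/
def blockIndex (u : RAryVert r l) : ℕ := level u / (h + 1)

/-- For a surviving `u`, the level of the root of its component. -/
def blockTop (u : RAryVert r l) : ℕ := min ((h + 1) * blockIndex h u + h) (l + 1)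

def blockRoot (u : RAryVert r l) : RAryVert r l := u.ancestor (blockTop h u - level u)

def blockHeight (u : RAryVert r l) : ℕ := blockTop h u - (h + 1) * blockIndex h u - 1

variable {h}

lemma level_le_blockTop (u : RAryVert r l) : level u ≤ blockTop h u := by
  have hmod := Nat.mod_add_div (level u) (h + 1)
  have hlt := Nat.mod_lt (level u) (by omega : 0 < h + 1)
  have hu := level_add_length u
  unfold blockTop blockIndex
  omega

lemma not_dvd_level_iff (u : RAryVert r l) :
    ¬ (h + 1) ∣ level u ↔ (h + 1) * blockIndex h u < level u := by
  have hmod := Nat.mod_add_div (level u) (h + 1)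
  rw [Nat.dvd_iff_mod_eq_zero, blockIndex]
  omega

lemma blockTop_le (u : RAryVert r l) : blockTop h u ≤ (h + 1) * blockIndex h u + h :=
  min_le_left _ _

lemma blockTop_le_add_one (u : RAryVert r l) : blockTop h u ≤ l + 1 :=
  min_le_right _ _

lemma blockTop_eq_of_blockIndex_eq {u v : RAryVert r l} (huv : blockIndex h u = blockIndex h v) :
    blockTop h u = blockTop h v := by
  rw [blockTop, blockTop, huv]

lemma blockIndex_eq_of_lt_of_le {u : RAryVert r l} {B : ℕ} (hlo : (h + 1) * B < level u)
    (hhi : level u ≤ (h + 1) * B + h) : blockIndex h u = B :=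
  Nat.div_eq_of_lt_le (by rw [mul_comm]; omega) (by rw [add_one_mul, mul_comm]; omega)

lemma not_dvd_level_of_lt_of_le {u : RAryVert r l} {B : ℕ} (hlo : (h + 1) * B < level u)
    (hhi : level u ≤ (h + 1) * B + h) : ¬ (h + 1) ∣ level u := by
  rwa [not_dvd_level_iff, blockIndex_eq_of_lt_of_le hlo hhi]

lemma blockIndex_cons {u v : RAryVert r l} {a : Fin r} (huv : u.val = a :: v.val)
    (hv : ¬ (h + 1) ∣ level v) : blockIndex h u = blockIndex h v := by
  rw [level_of_cons huv] at hv
  rw [blockIndex, blockIndex, level_of_cons huv, Nat.succ_div, if_neg hv, add_zero]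

lemma blockRoot_cons {u v : RAryVert r l} {a : Fin r} (huv : u.val = a :: v.val)
    (hv : ¬ (h + 1) ∣ level v) : blockRoot h u = blockRoot h v := by
  have htop := blockTop_eq_of_blockIndex_eq (blockIndex_cons huv hv)
  have hlev := level_of_cons huv
  have hle := level_le_blockTop (h := h) v
  apply Subtype.ext
  simp only [blockRoot, ancestor, htop, huv]
  rw [show blockTop h v - level u = blockTop h v - level v + 1 by omega, List.drop_succ_cons]

lemma level_blockRoot (u : RAryVert r l) : level (blockRoot h u) = blockTop h u := by
  have hle := level_le_blockTop (h := h) u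
  have hu := level_add_length u
  rw [blockRoot, level_ancestor]
  · omega
  · have := blockTop_le_add_one (h := h) u
    omega

lemma blockIndex_blockRoot {u : RAryVert r l} (hu : ¬ (h + 1) ∣ level u) :
    blockIndex h (blockRoot h u) = blockIndex h u := by
  rw [not_dvd_level_iff] at hu
  have := level_le_blockTop (h := h) u
  exact blockIndex_eq_of_lt_of_le (by rw [level_blockRoot]; omega)
    (by rw [level_blockRoot]; exact blockTop_le u)

lemma not_dvd_level_blockRoot {u : RAryVert r l} (hu : ¬ (h + 1) ∣ level u) :
    ¬ (h + 1) ∣ level (blockRoot h u) := by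
  rw [not_dvd_level_iff, blockIndex_blockRoot hu, level_blockRoot]
  rw [not_dvd_level_iff] at hu
  exact hu.trans_le (level_le_blockTop u)

lemma blockHeight_le (u : RAryVert r l) : blockHeight h u ≤ h - 1 := by
  have := blockTop_le (h := h) u
  unfold blockHeight
  omega

section append

variable {w x : RAryVert r l} {p : List (Fin r)}

lemma level_add_length_eq_blockTop (hx : x.val = p ++ (blockRoot h w).val) :
    level x + p.length = blockTop h w := by
  have hlx := level_add_length x
  have hlρ := level_add_length (blockRoot h w)
  rw [level_blockRoot] at hlρ
  rw [hx, List.length_append] at hlx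
  omega

lemma level_mem_block_of_eq_append (hw : ¬ (h + 1) ∣ level w) (hp : p.length ≤ blockHeight h w)
    (hx : x.val = p ++ (blockRoot h w).val) :
    (h + 1) * blockIndex h w < level x ∧ level x ≤ (h + 1) * blockIndex h w + h := by
  have hlev := level_add_length_eq_blockTop hx
  have htop := blockTop_le (h := h) w
  have hlw := level_le_blockTop (h := h) w
  rw [not_dvd_level_iff] at hw
  unfold blockHeight at hp
  omega

lemma blockRoot_of_eq_append (hw : ¬ (h + 1) ∣ level w) (hp : p.length ≤ blockHeight h w)
    (hx : x.val = p ++ (blockRoot h w).val) : blockRoot h x = blockRoot h w := by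
  obtain ⟨hlo, hhi⟩ := level_mem_block_of_eq_append hw hp hx
  have htop := blockTop_eq_of_blockIndex_eq (blockIndex_eq_of_lt_of_le hlo hhi)
  have hlev := level_add_length_eq_blockTop hx
  apply Subtype.ext
  change x.val.drop (blockTop h x - level x) = (blockRoot h w).val
  rw [htop, show blockTop h w - level x = p.length by omega, hx, List.drop_left]

lemma not_dvd_level_of_eq_append (hw : ¬ (h + 1) ∣ level w) (hp : p.length ≤ blockHeight h w)
    (hx : x.val = p ++ (blockRoot h w).val) : ¬ (h + 1) ∣ level x :=
  (level_mem_block_of_eq_append hw hp hx).elim not_dvd_level_of_lt_of_le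

end append

lemma exists_eq_append_blockRoot {x : RAryVert r l} (hx : ¬ (h + 1) ∣ level x) :
    ∃ p : List (Fin r), p.length ≤ blockHeight h x ∧ x.val = p ++ (blockRoot h x).val := by
  refine ⟨x.val.take (blockTop h x - level x), ?_, (List.take_append_drop _ _).symm⟩
  rw [not_dvd_level_iff] at hx
  rw [List.length_take, blockHeight]
  omega

lemma blockHeight_eq_of_blockIndex_eq {u v : RAryVert r l}
    (huv : blockIndex h u = blockIndex h v) : blockHeight h u = blockHeight h v := by
  rw [blockHeight, blockHeight, blockTop_eq_of_blockIndex_eq huv, huv]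

lemma blockHeight_add_length_blockRoot_le (u : RAryVert r l) :
    blockHeight h u + (blockRoot h u).val.length ≤ l := by
  have hlen := level_add_length (blockRoot h u)
  have hle := (blockRoot h u).2
  rw [level_blockRoot] at hlen
  unfold blockHeight
  omega

end RAryVert

open RAryVert

abbrev survivors (r l h : ℕ) : Set (RAryVert r l) := {w | (h + 1) ∣ level w}ᶜ

abbrev prunedTree (r l h : ℕ) : SimpleGraph (survivors r l h) :=
  (raryTree r l).induce (survivors r l h)

namespace prunedTree

variable {r l h : ℕ}

def root (x : survivors r l h) : survivors r l h :=
  ⟨blockRoot h x.val, not_dvd_level_blockRoot x.2⟩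

lemma blockIndex_eq_of_adj {x y : survivors r l h} (hxy : (prunedTree r l h).Adj x y) :
    blockIndex h x.val = blockIndex h y.val := by
  rcases hxy with ⟨a, hxy⟩ | ⟨a, hyx⟩
  · exact blockIndex_cons hxy y.2
  · exact (blockIndex_cons hyx x.2).symm

lemma root_eq_of_adj {x y : survivors r l h} (hxy : (prunedTree r l h).Adj x y) :
    root x = root y := by
  rcases hxy with ⟨a, hxy⟩ | ⟨a, hyx⟩
  · exact Subtype.ext (blockRoot_cons hxy y.2)
  · exact Subtype.ext (blockRoot_cons hyx x.2).symm

lemma blockIndex_eq_of_reachable {x y : survivors r l h}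
    (hxy : (prunedTree r l h).Reachable x y) : blockIndex h x.val = blockIndex h y.val :=
  hxy.apply_eq_of_forall_adj (f := fun z => blockIndex h z.val) fun _ _ => blockIndex_eq_of_adj

lemma root_eq_of_reachable {x y : survivors r l h} (hxy : (prunedTree r l h).Reachable x y) :
    root x = root y :=
  hxy.apply_eq_of_forall_adj fun _ _ => root_eq_of_adj

lemma exists_walk_root (x : survivors r l h) :
    ∃ p : (prunedTree r l h).Walk x (root x), p.length = blockTop h x.val - level x.val := by
  obtain ⟨n, hn⟩ : ∃ n, blockTop h x.val - level x.val = n := ⟨_, rfl⟩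
  induction n generalizing x with
  | zero =>
    have hroot : x = root x := Subtype.ext (Subtype.ext (by simp [root, blockRoot, ancestor, hn]))
    exact ⟨Walk.nil.copy rfl hroot, by rw [hn, Walk.length_copy]; rfl⟩
  | succ n ih =>
    have htop := blockTop_le (h := h) x.val
    have hlo := (not_dvd_level_iff x.val).1 x.2
    obtain ⟨a, v, hxv⟩ := exists_eq_cons_of_level_le
      (show level x.val ≤ l by have := blockTop_le_add_one (h := h) x.val; omega)
    have hlev := level_of_cons hxv
    have hv : ¬ (h + 1) ∣ level v :=
      not_dvd_level_of_lt_of_le (B := blockIndex h x.val) (by omega) (by omega)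
    have hnv : blockTop h v - level v = n := by
      rw [← blockTop_eq_of_blockIndex_eq (blockIndex_cons hxv hv)]
      omega
    obtain ⟨p, hp⟩ := ih ⟨v, hv⟩ hnv
    have hroot : root ⟨v, hv⟩ = root x := Subtype.ext (blockRoot_cons hxv hv).symm
    refine ⟨(Walk.cons (Or.inl ⟨a, hxv⟩) p).copy rfl hroot, ?_⟩
    rw [Walk.length_copy, hn]
    exact (Walk.length_cons _ p).trans (by rw [hp, hnv])

lemma reachable_root (x : survivors r l h) : (prunedTree r l h).Reachable x (root x) :=
  (exists_walk_root x).elim fun p _ => p.reachable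

lemma reachable_of_root_eq {x y : survivors r l h} (hxy : root x = root y) :
    (prunedTree r l h).Reachable x y :=
  (reachable_root x).trans (hxy ▸ (reachable_root y).symm)

lemma reachable_iff_exists_append (w x : survivors r l h) :
    (prunedTree r l h).Reachable w x ↔ ∃ p : List (Fin r),
      p.length ≤ blockHeight h w.val ∧ x.val.val = p ++ (blockRoot h w.val).val := by
  constructor
  · intro hwx
    obtain ⟨p, hp, hx⟩ := exists_eq_append_blockRoot x.2
    rw [blockHeight_eq_of_blockIndex_eq (blockIndex_eq_of_reachable hwx).symm] at hp
    have hroot : blockRoot h x.val = blockRoot h w.val :=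
      congrArg Subtype.val (root_eq_of_reachable hwx).symm
    exact ⟨p, hp, by rw [hx, hroot]⟩
  · rintro ⟨p, hp, hx⟩
    exact reachable_of_root_eq (Subtype.ext (blockRoot_of_eq_append w.2 hp hx).symm)

lemma dist_root_add_one_le (x : survivors r l h) :
    (prunedTree r l h).dist x (root x) + 1 ≤ h := by
  obtain ⟨p, hp⟩ := exists_walk_root x
  have hdist := dist_le p
  have htop := blockTop_le (h := h) x.val
  have hlo := (not_dvd_level_iff x.val).1 x.2
  have hhi := level_le_blockTop (h := h) x.val
  omega

lemma dist_add_two_le {x y : survivors r l h} (hxy : (prunedTree r l h).Reachable x y) :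
    (prunedTree r l h).dist x y + 2 ≤ 2 * h := by
  have hx := dist_root_add_one_le x
  have hy := dist_root_add_one_le y
  have htri := (reachable_root x).dist_triangle_left y
  rw [root_eq_of_reachable hxy] at htri hx
  rw [dist_comm] at hy
  omega

theorem nonempty_induce_supp_iso_raryTree (w : survivors r l h) :
    Nonempty (((prunedTree r l h).induce ((prunedTree r l h).connectedComponentMk w).supp) ≃g
      raryTree r (blockHeight h w.val)) := by
  let f := (subtreeEmbedding (blockRoot h w.val).val
    (blockHeight_add_length_blockRoot_le w.val)).codRestrict (survivors r l h)
    fun p => not_dvd_level_of_eq_append (x := subtreeEmbedding _ _ p) w.2 p.2 rfl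
  have hsupp : ((prunedTree r l h).connectedComponentMk w).supp = Set.range f := by
    ext x
    rw [ConnectedComponent.mem_supp_iff, ConnectedComponent.eq, reachable_comm,
      reachable_iff_exists_append]
    constructor
    · rintro ⟨p, hp, hx⟩
      exact ⟨⟨p, hp⟩, Subtype.ext (Subtype.ext hx.symm)⟩
    · rintro ⟨p, rfl⟩
      exact ⟨p.val, p.2, rfl⟩
  rw [hsupp]
  exact ⟨f.isoInduceRange.symm⟩

theorem exists_iso_raryTree (c : (prunedTree r l h).ConnectedComponent) :
    ∃ h' ≤ h - 1, Nonempty (((prunedTree r l h).induce c.supp) ≃g raryTree r h') := by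
  obtain ⟨w, rfl⟩ := c.exists_rep
  exact ⟨blockHeight h w.val, blockHeight_le w.val, nonempty_induce_supp_iso_raryTree w⟩

theorem failureState {k : ℕ} (hk : 2 * h ≤ k + 1) : FailureState (prunedTree r l h) k :=
  fun _ _ huv => by have := dist_add_two_le huv; omega

end prunedTree

theorem raryTree_deletion_failure_general (r l k h : ℕ) (hh : h = (k + 1) / 2)
    (V' : Set (RAryVert r l)) (hV' : V' = {w | (h + 1) ∣ level w}) :
    (∀ c : ((raryTree r l).induce V'ᶜ).ConnectedComponent,
        ∃ h' ≤ h - 1,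
          Nonempty ((((raryTree r l).induce V'ᶜ).induce c.supp) ≃g raryTree r h')) ∧
      FailureState ((raryTree r l).induce V'ᶜ) k := by
  subst hV'
  exact ⟨prunedTree.exists_iso_raryTree, prunedTree.failureState (by omega)⟩

/-- Deleting from the perfect `r`-ary tree of height `l` all
vertices on levels that are multiples of `⌈k/2⌉ + 1` leaves components that are
perfect `r`-ary trees of height at most `⌈k/2⌉ - 1`; in particular the result
is in a failure state for `k`. -/
theorem raryTree_deletion_failure (r l k h : ℕ) (hr : 2 ≤ r) (hl : 1 ≤ l)
    (hk : 2 ≤ k) (hh : h = (k + 1) / 2)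
    (V' : Set (RAryVert r l)) (hV' : V' = {w | (h + 1) ∣ level w}) :
    (∀ c : ((raryTree r l).induce V'ᶜ).ConnectedComponent,
        ∃ h' ≤ h - 1,
          Nonempty ((((raryTree r l).induce V'ᶜ).induce c.supp) ≃g raryTree r h')) ∧
      FailureState ((raryTree r l).induce V'ᶜ) k :=
  raryTree_deletion_failure_general r l k h hh V' hV'
end

section
/- Let n be a positive integer, k ≥ 2 an integer, and p a nonnegative integer with p ≤ ⌊n/(k+1)⌋. For the path graph P_n: if p = ⌊n/(k+1)⌋ then CM_k(P_n, p) = 0, and if p < ⌊n/(k+1)⌋ then CM_k(P_n, p) = ⌊(n − p(k+1) − 1)/k⌋. -/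
/-!
Record each deleted vertex by its position and each deleted edge `{i, i + 1}` by `i + 1`; call
these positions barriers. Two surviving vertices `u ≤ v` are connected iff no barrier lies in
`(u, v]`, and then their distance is `v - u`. So a failure state for `k` means that every window
of `k + 1` consecutive positions starting at a surviving vertex has a barrier after its start.
A deleted vertex meets at most `k + 1` of the `n - k` windows and a deleted edge at most `k`,
which forces `(n - p(k+1) - 1) / k` deleted edges. Conversely, deleting the vertices
`j(k+1) + k` for `j < p` and then cutting the remaining tail every `k` positions attains it.
-/

open SimpleGraph

open Finset

namespace SimpleGraph

variable {V : Type*} {G : SimpleGraph V}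

theorem reachable_and_dist_le_of_adj_succ (g : ℕ → V) (d : ℕ)
    (h : ∀ t < d, G.Adj (g t) (g (t + 1))) :
    G.Reachable (g 0) (g d) ∧ G.dist (g 0) (g d) ≤ d := by
  suffices ∃ W : G.Walk (g 0) (g d), W.length = d by
    obtain ⟨W, hW⟩ := this
    exact ⟨W.reachable, (dist_le W).trans_eq hW⟩
  induction d with
  | zero => exact ⟨.nil, rfl⟩
  | succ d ih =>
    obtain ⟨W, hW⟩ := ih fun t ht => h t (by omega)
    exact ⟨W.concat (h d (by omega)), by rw [Walk.length_concat, hW]⟩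

theorem Reachable.le_add_dist {f : V → ℕ} (hf : ∀ a b, G.Adj a b → f b ≤ f a + 1) {u v : V}
    (h : G.Reachable u v) : f v ≤ f u + G.dist u v := by
  obtain ⟨W, hW⟩ := h.exists_walk_length_eq_dist
  rw [← hW]
  clear hW h
  induction W with
  | nil => simp
  | cons hadj _ ih => have := hf _ _ hadj; rw [Walk.length_cons]; omega

theorem Reachable.iff_of_adj {P : V → Prop} (hP : ∀ a b, G.Adj a b → (P a ↔ P b)) {u v : V}
    (h : G.Reachable u v) : P u ↔ P v := by
  obtain ⟨W⟩ := h
  induction W with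
  | nil => rfl
  | cons hadj _ ih => exact (hP _ _ hadj).trans ih

end SimpleGraph

section Connectivity

variable {V : Type*} {G : SimpleGraph V} {k : ℕ}

theorem failureState_bot (hk : 0 < k) : FailureState (⊥ : SimpleGraph V) k := by
  intro u v h
  rw [reachable_bot.mp h, dist_self]
  exact hk

theorem CE_le {E : Finset (Sym2 V)} (hE : ↑E ⊆ G.edgeSet)
    (hF : FailureState (G.deleteEdges ↑E) k) : CE G k ≤ E.card :=
  Nat.sInf_le ⟨E, hE, rfl, hF⟩

theorem le_CE [Finite V] (hk : 0 < k) {q : ℕ}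
    (h : ∀ E : Finset (Sym2 V), ↑E ⊆ G.edgeSet → FailureState (G.deleteEdges ↑E) k → q ≤ E.card) :
    q ≤ CE G k := by
  refine le_csInf ⟨_, G.edgeSet.toFinite.toFinset, by simp, rfl, ?_⟩ ?_
  · rw [Set.Finite.coe_toFinset, deleteEdges_edgeSet, sdiff_self]
    exact failureState_bot hk
  · rintro _ ⟨E, hE, rfl, hF⟩
    exact h E hE hF

theorem CM_eq_of_bounds {p q : ℕ} (S : Finset V) (hS : S.card = p)
    (hSq : CE (G.induce (↑S)ᶜ) k ≤ q)
    (hq : ∀ T : Finset V, T.card = p → q ≤ CE (G.induce (↑T)ᶜ) k) : CM G k p = q := by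
  refine le_antisymm ((Nat.sInf_le ?_).trans hSq) (le_csInf ⟨_, S, hS, rfl⟩ ?_)
  · exact ⟨S, hS, rfl⟩
  · rintro _ ⟨T, hT, rfl⟩
    exact hq T hT

end Connectivity

theorem exists_barrier_free_window {n k : ℕ} (A C : Finset ℕ)
    (h : A.card * (k + 1) + C.card * k + k < n) :
    ∃ s, s + k < n ∧ s ∉ A ∧ ∀ c ∈ A ∪ C, ¬ (s < c ∧ c ≤ s + k) := by
  set bad := A.biUnion (fun a => Icc (a - k) a) ∪ C.biUnion (fun c => Ico (c - k) c)
  have hbad : bad.card < (range (n - k)).card := by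
    have hA := card_biUnion_le_card_mul A (fun a => Icc (a - k) a) (k + 1) fun a _ => by
      rw [Nat.card_Icc]; omega
    have hC := card_biUnion_le_card_mul C (fun c => Ico (c - k) c) k fun c _ => by
      rw [Nat.card_Ico]; omega
    have : bad.card ≤ _ + _ := card_union_le _ _
    rw [card_range]
    omega
  obtain ⟨s, hs, hsbad⟩ := exists_mem_notMem_of_card_lt_card hbad
  simp only [bad, mem_union, mem_biUnion, mem_Icc, mem_Ico, not_or, not_exists, not_and] at hsbad
  rw [mem_range] at hs
  refine ⟨s, by omega, fun hsA => hsbad.1 s hsA (by omega) le_rfl, ?_⟩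
  rintro c hc ⟨hsc, hcs⟩
  rcases mem_union.mp hc with hc | hc
  · exact hsbad.1 c hc (by omega) hsc.le
  · exact hsbad.2 c hc (by omega) hsc

section CutGraph

variable {n : ℕ}

/-- An edge `{i, i + 1}` of the path is recorded by its upper endpoint `i + 1`. -/
def edgeTop {s : Set (Fin n)} : Sym2 s → ℕ :=
  Sym2.lift ⟨fun a b => max (a : ℕ) (b : ℕ), fun _ _ => max_comm _ _⟩

variable (T : Finset (Fin n)) (C : Finset ℕ)

noncomputable def cutEdges : Finset (Sym2 ↥(↑T : Set (Fin n))ᶜ) :=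
  ((pathGraph n).induce (↑T)ᶜ).edgeSet.toFinite.toFinset.filter (edgeTop · ∈ C)

noncomputable def cutGraph : SimpleGraph ↥(↑T : Set (Fin n))ᶜ :=
  ((pathGraph n).induce (↑T)ᶜ).deleteEdges ↑(cutEdges T C)

def barriers : Finset ℕ := T.image Fin.val ∪ C

def BarrierInEveryWindow (k : ℕ) : Prop :=
  ∀ x, x + k < n → x ∉ T.image Fin.val → ∃ c ∈ barriers T C, x < c ∧ c ≤ x + k

variable {T C}

theorem cutGraph_adj {a b : ↥(↑T : Set (Fin n))ᶜ} :
    (cutGraph T C).Adj a b ↔ ((a : ℕ) + 1 = b ∨ (b : ℕ) + 1 = a) ∧ max (a : ℕ) b ∉ C := by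
  simp only [cutGraph, cutEdges, deleteEdges_adj, mem_coe, mem_filter, Set.Finite.mem_toFinset,
    mem_edgeSet, comap_adj, Function.Embedding.coe_subtype, pathGraph_adj]
  constructor
  · rintro ⟨hab, hC⟩
    exact ⟨hab, fun h => hC ⟨hab, h⟩⟩
  · rintro ⟨hab, hC⟩
    exact ⟨hab, fun h => hC h.2⟩

theorem val_notMem_image {x : ↥(↑T : Set (Fin n))ᶜ} : (x : ℕ) ∉ T.image Fin.val := fun hx => by
  obtain ⟨t, ht, htx⟩ := mem_image.mp hx
  exact x.2 (Fin.ext htx ▸ ht)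

theorem card_cutEdges_le : (cutEdges T C).card ≤ C.card := by
  refine card_le_card_of_injOn edgeTop (fun e he => (mem_filter.mp he).2) ?_
  intro e₁ he₁ e₂ he₂ htop
  induction e₁ using Sym2.ind with | h a b => ?_
  induction e₂ using Sym2.ind with | h c d => ?_
  simp only [cutEdges, mem_coe, mem_filter, Set.Finite.mem_toFinset, mem_edgeSet,
    comap_adj, Function.Embedding.coe_subtype, pathGraph_adj] at he₁ he₂
  simp only [edgeTop, Sym2.lift_mk] at htop
  simp only [Sym2.eq_iff, Subtype.ext_iff, Fin.ext_iff]
  omega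

theorem cutGraph_image_edgeTop_le (E : Finset (Sym2 ↥(↑T : Set (Fin n))ᶜ)) :
    cutGraph T (E.image edgeTop) ≤ ((pathGraph n).induce (↑T)ᶜ).deleteEdges ↑E := by
  intro a b hab
  rw [cutGraph, deleteEdges_adj] at hab
  refine deleteEdges_adj.mpr ⟨hab.1, fun he => hab.2 ?_⟩
  simp only [cutEdges, mem_coe, mem_filter, Set.Finite.mem_toFinset, mem_edgeSet]
  exact ⟨hab.1, mem_image_of_mem _ he⟩

theorem cutGraph_reachable_and_dist_le {u v : ↥(↑T : Set (Fin n))ᶜ} (huv : (u : ℕ) ≤ v)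
    (hfree : ∀ c ∈ barriers T C, ¬ ((u : ℕ) < c ∧ c ≤ v)) :
    (cutGraph T C).Reachable u v ∧ (cutGraph T C).dist u v ≤ (v : ℕ) - u := by
  have hvert : ∀ m, (u : ℕ) ≤ m → m ≤ v → ∃ x : ↥(↑T : Set (Fin n))ᶜ, (x : ℕ) = m := by
    intro m hum hmv
    rcases hum.eq_or_lt with rfl | hlt
    · exact ⟨u, rfl⟩
    · refine ⟨⟨⟨m, by omega⟩, fun hmem => hfree m ?_ ⟨hlt, hmv⟩⟩, rfl⟩
      exact mem_union_left _ (mem_image_of_mem _ hmem)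
  have : Nonempty ↥(↑T : Set (Fin n))ᶜ := ⟨u⟩
  choose! g hg using hvert
  have hchain := reachable_and_dist_le_of_adj_succ (G := cutGraph T C)
    (fun i => g (u + min i (v - u))) (v - u) fun t ht => by
      rw [cutGraph_adj, hg _ (by omega) (by omega), hg _ (by omega) (by omega)]
      exact ⟨by omega, fun hC => hfree _ (mem_union_right _ hC) ⟨by omega, by omega⟩⟩
  have hpos : ∀ x y : ↥(↑T : Set (Fin n))ᶜ, (x : ℕ) = y → x = y :=
    fun _ _ h => Subtype.ext (Fin.ext h)
  rwa [hpos (g _) u (hg _ (by omega) (by omega) |>.trans (by omega)),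
    hpos (g _) v (hg _ (by omega) (by omega) |>.trans (by omega))] at hchain

theorem le_iff_le_of_cutGraph_reachable {u v : ↥(↑T : Set (Fin n))ᶜ}
    (h : (cutGraph T C).Reachable u v) {c : ℕ} (hc : c ∈ barriers T C) :
    c ≤ (u : ℕ) ↔ c ≤ (v : ℕ) := by
  refine h.iff_of_adj (P := fun x : ↥(↑T : Set (Fin n))ᶜ => c ≤ (x : ℕ)) fun a b hab => ?_
  rw [cutGraph_adj] at hab
  have hcab : c ≠ max (a : ℕ) b := by
    rintro rfl
    rcases mem_union.mp hc with hT | hC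
    · rcases max_choice (a : ℕ) b with hm | hm <;> rw [hm] at hT
      exacts [val_notMem_image hT, val_notMem_image hT]
    · exact hab.2 hC
  omega

theorem failureState_cutGraph {k : ℕ} (hgap : BarrierInEveryWindow T C k) :
    FailureState (cutGraph T C) k := by
  suffices key : ∀ u v, (cutGraph T C).Reachable u v → (u : ℕ) ≤ v →
      (cutGraph T C).dist u v < k by
    intro u v h
    rcases le_total (u : ℕ) v with huv | hvu
    · exact key u v h huv
    · rw [dist_comm]
      exact key v u h.symm hvu
  intro u v h huv
  have hfree : ∀ c ∈ barriers T C, ¬ ((u : ℕ) < c ∧ c ≤ v) := fun c hc ⟨hu, hv⟩ => by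
    have := le_iff_le_of_cutGraph_reachable h hc
    omega
  have hdist := (cutGraph_reachable_and_dist_le huv hfree).2
  by_contra! hk
  obtain ⟨c, hc, huc, hcu⟩ := hgap u (by omega) val_notMem_image
  exact hfree c hc ⟨huc, by omega⟩

theorem CE_induce_pathGraph_le {k : ℕ} (hgap : BarrierInEveryWindow T C k) :
    CE ((pathGraph n).induce (↑T)ᶜ) k ≤ C.card :=
  (CE_le (fun _ he => (Set.Finite.mem_toFinset _).mp (mem_filter.mp he).1)
    (failureState_cutGraph hgap)).trans card_cutEdges_le

end CutGraph

theorem le_CE_induce_pathGraph {n k : ℕ} (hk : 0 < k) (T : Finset (Fin n)) :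
    (n - T.card * (k + 1) - 1) / k ≤ CE ((pathGraph n).induce (↑T)ᶜ) k := by
  refine le_CE hk fun E _ hF => ?_
  by_contra! hE
  have hq := (Nat.le_div_iff_mul_le hk).mp hE
  rw [Nat.succ_mul] at hq
  have hA := Nat.mul_le_mul_right (k + 1) (card_image_le (s := T) (f := Fin.val))
  have hC := Nat.mul_le_mul_right k (card_image_le (s := E) (f := edgeTop))
  obtain ⟨s, hsn, hsT, hfree⟩ :=
    exists_barrier_free_window (n := n) (k := k) (T.image Fin.val) (E.image edgeTop) (by omega)
  let u : ↥(↑T : Set (Fin n))ᶜ := ⟨⟨s, by omega⟩, fun h => hsT (mem_image_of_mem _ h)⟩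
  let v : ↥(↑T : Set (Fin n))ᶜ := ⟨⟨s + k, hsn⟩, fun h =>
    hfree (s + k) (mem_union_left _ (mem_image_of_mem _ h)) ⟨by omega, le_rfl⟩⟩
  have hreach : (((pathGraph n).induce (↑T)ᶜ).deleteEdges ↑E).Reachable u v :=
    (cutGraph_reachable_and_dist_le (u := u) (v := v) (by simp [u, v])
      (by simpa [u, v, barriers] using hfree)).1.mono (cutGraph_image_edgeTop_le E)
  have hlong : s + k ≤ s + _ :=
    hreach.le_add_dist (f := fun x : ↥(↑T : Set (Fin n))ᶜ => (x : ℕ)) fun a b hab => by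
      have := pathGraph_adj.mp (induce_adj.mp (deleteEdges_adj.mp hab).1)
      omega
  have := hF u v hreach
  omega

def separatorPositions (k p : ℕ) : Finset ℕ :=
  (range p).image fun j => j * (k + 1) + k

def cutPositions (k p q : ℕ) : Finset ℕ :=
  (Icc 1 q).image fun j => p * (k + 1) + j * k

theorem card_separatorPositions (k p : ℕ) : (separatorPositions k p).card = p := by
  rw [separatorPositions, card_image_of_injective _ fun a b h => ?_, card_range]
  exact Nat.eq_of_mul_eq_mul_right (Nat.succ_pos k) (by simpa using h)

theorem card_cutPositions_le (k p q : ℕ) : (cutPositions k p q).card ≤ q :=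
  card_image_le.trans (by simp)

theorem exists_barrier_in_window {n k p x : ℕ} (hk : 0 < k) (hx : x + k < n)
    (hxS : x ∉ separatorPositions k p) :
    ∃ c ∈ separatorPositions k p ∪ cutPositions k p ((n - p * (k + 1) - 1) / k),
      x < c ∧ c ≤ x + k := by
  rcases lt_or_ge x (p * (k + 1)) with hxP | hxP
  -- the witness is the separator `j(k+1) + k` closing the block of `x`, resp. the next tail cut
  · have hdiv := Nat.div_add_mod x (k + 1)
    have hmod := Nat.mod_lt x (show 0 < k + 1 by omega)
    have hj : x / (k + 1) < p := (Nat.div_lt_iff_lt_mul (by omega)).mpr hxP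
    set j := x / (k + 1)
    have hne : x ≠ j * (k + 1) + k := fun h => hxS (mem_image.mpr ⟨j, mem_range.mpr hj, h.symm⟩)
    rw [Nat.mul_comm] at hdiv
    exact ⟨_, mem_union_left _ (mem_image_of_mem _ (mem_range.mpr hj)), by omega, by omega⟩
  · have hdiv := Nat.div_add_mod (x - p * (k + 1)) k
    have hmod := Nat.mod_lt (x - p * (k + 1)) hk
    set j := (x - p * (k + 1)) / k
    rw [Nat.mul_comm] at hdiv
    have hjq : j + 1 ≤ (n - p * (k + 1) - 1) / k := by
      rw [Nat.le_div_iff_mul_le hk, Nat.succ_mul]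
      omega
    have hcut : p * (k + 1) + (j + 1) * k ∈ cutPositions k p ((n - p * (k + 1) - 1) / k) :=
      mem_image.mpr ⟨j + 1, mem_Icc.mpr ⟨Nat.le_add_left 1 j, hjq⟩, rfl⟩
    refine ⟨_, mem_union_right _ hcut, ?_, ?_⟩ <;>
    · rw [Nat.succ_mul]
      omega

theorem CM_pathGraph_eq {n k p : ℕ} (hk : 0 < k) (hp : p * (k + 1) ≤ n) :
    CM (pathGraph n) k p = (n - p * (k + 1) - 1) / k := by
  have hS : ∀ m ∈ separatorPositions k p, m < n := by
    simp only [separatorPositions, mem_image, mem_range]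
    rintro _ ⟨j, hj, rfl⟩
    have := Nat.mul_le_mul_right (k + 1) (Nat.succ_le_of_lt hj)
    rw [Nat.succ_mul] at this
    omega
  refine CM_eq_of_bounds ((separatorPositions k p).attachFin hS)
    (by rw [card_attachFin, card_separatorPositions]) ?_
    fun T hT => hT ▸ le_CE_induce_pathGraph hk T
  refine (CE_induce_pathGraph_le fun x hx hxS => ?_).trans (card_cutPositions_le k p _)
  rw [barriers, image_val_attachFin] at *
  exact exists_barrier_in_window hk hx hxS

theorem CM_pathGraph_general (n k p : ℕ) (hk : 2 ≤ k)
    (hp : p ≤ n / (k + 1)) :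
    (p = n / (k + 1) → CM (SimpleGraph.pathGraph n) k p = 0) ∧
    (p < n / (k + 1) →
      CM (SimpleGraph.pathGraph n) k p = (n - p * (k + 1) - 1) / k) := by
  have hCM : CM (pathGraph n) k p = (n - p * (k + 1) - 1) / k :=
    CM_pathGraph_eq (by omega) ((Nat.le_div_iff_mul_le (by omega)).mp hp)
  refine ⟨fun hpn => ?_, fun _ => hCM⟩
  have hmod := Nat.lt_div_mul_add (a := n) (show 0 < k + 1 by omega)
  rw [← hpn] at hmod
  rw [hCM, Nat.div_eq_of_lt (by omega)]

/-- The `k`-diameter component connectivity function of the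
path graph on `n` vertices. -/
theorem CM_pathGraph (n k p : ℕ) (hn : 0 < n) (hk : 2 ≤ k)
    (hp : p ≤ n / (k + 1)) :
    (p = n / (k + 1) → CM (SimpleGraph.pathGraph n) k p = 0) ∧
    (p < n / (k + 1) →
      CM (SimpleGraph.pathGraph n) k p = (n - p * (k + 1) - 1) / k) :=
  CM_pathGraph_general n k p hk hp
end

section
/- Let n be a positive integer and k ≥ 2 an integer. Let P and Q be a set of vertices and a set of edges of the path graph P_n with |P| = p and |Q| = q, such that every connected component of (P_n − P) − Q has diameter less than k. Then n ≤ (p + q + 1)k + p. -/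
open SimpleGraph

/-!
Call `m` a cut position if vertex `m` lies in `P` or the edge `m(m+1)` lies in `Q`; there are at
most `p + q` of them. Two surviving vertices `a ≤ b` with no cut position in `[a, b)` are joined by
the path `a, a + 1, …, b`, and since every edge of `P_n` changes the label by one, no walk between
them is shorter than `b - a`. In a failure state this forces `b - a < k`, so grouping the `n - p`
surviving vertices by the number of cut positions below them yields at most `p + q + 1` groups of
at most `k` vertices each.
-/

open Finset

theorem Finset.card_le_of_forall_sub_lt {s : Finset ℕ} {k : ℕ}
    (h : ∀ x ∈ s, ∀ y ∈ s, x ≤ y → y - x < k) : #s ≤ k := by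
  obtain rfl | hs := s.eq_empty_or_nonempty
  · simp
  have hsub : s ⊆ Ico (s.min' hs) (s.min' hs + k) := fun y hy => by
    have hle := s.min'_le y hy
    have := h _ (s.min'_mem hs) y hy hle
    rw [mem_Ico]
    omega
  simpa using card_le_card hsub

theorem SimpleGraph.pathGraph.val_sub_val_le_length {n : ℕ} {u v : Fin n}
    (w : (pathGraph n).Walk u v) : (v : ℕ) - u ≤ w.length := by
  induction w with
  | nil => simp
  | cons h _ ih =>
    rw [pathGraph_adj] at h
    simp only [Walk.length_cons]
    omega

variable {n : ℕ}

/-- The graph `(P_n − P) − Q`. -/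
abbrev pathRemainder (P : Finset (Fin n)) (Q : Finset (Sym2 ((P : Set (Fin n))ᶜ : Set (Fin n)))) :
    SimpleGraph ((P : Set (Fin n))ᶜ : Set (Fin n)) :=
  ((pathGraph n).induce (P : Set (Fin n))ᶜ).deleteEdges
    (Q : Set (Sym2 ((P : Set (Fin n))ᶜ : Set (Fin n))))

namespace pathRemainder

variable {P : Finset (Fin n)} {Q : Finset (Sym2 ((P : Set (Fin n))ᶜ : Set (Fin n)))}

theorem val_sub_val_le_dist {a b : ((P : Set (Fin n))ᶜ : Set (Fin n))}
    (hab : (pathRemainder P Q).Reachable a b) : (b : ℕ) - a ≤ (pathRemainder P Q).dist a b := by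
  obtain ⟨w, hw⟩ := hab.exists_walk_length_eq_dist
  rw [← hw, ← Walk.length_map ((Embedding.induce _).toHom.comp (Hom.ofLE (deleteEdges_le _)))]
  exact pathGraph.val_sub_val_le_length _

variable (P Q) in
/-- An edge of `Q` is recorded by its smaller endpoint. -/
def cuts : Finset ℕ :=
  P.image Fin.val ∪ Q.image (Sym2.lift ⟨fun a b => min a.1.1 b.1.1, fun _ _ => min_comm _ _⟩)

theorem card_cuts_le : #(cuts P Q) ≤ #P + #Q :=
  (card_union_le _ _).trans (add_le_add card_image_le card_image_le)

variable (P Q) in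
def cutsBelow (i : ℕ) : ℕ := #{m ∈ cuts P Q | m < i}

theorem cutsBelow_le (i : ℕ) : cutsBelow P Q i ≤ #P + #Q :=
  (card_filter_le _ _).trans card_cuts_le

theorem notMem_cuts_of_cutsBelow_eq {i j m : ℕ} (h : cutsBelow P Q i = cutsBelow P Q j)
    (him : i ≤ m) (hmj : m < j) : m ∉ cuts P Q := fun hm => by
  have hsub : {m ∈ cuts P Q | m < i} ⊆ {m ∈ cuts P Q | m < j} := fun x hx => by
    rw [mem_filter] at hx ⊢
    exact ⟨hx.1, by omega⟩
  have hmj' : m ∈ {m ∈ cuts P Q | m < j} := mem_filter.2 ⟨hm, hmj⟩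
  rw [← eq_of_subset_of_card_le hsub h.ge, mem_filter] at hmj'
  omega

theorem reachable_of_forall_notMem_cuts {a b : ((P : Set (Fin n))ᶜ : Set (Fin n))}
    (hab : (a : ℕ) ≤ b) (h : ∀ m, (a : ℕ) ≤ m → m < b → m ∉ cuts P Q) :
    (pathRemainder P Q).Reachable a b := by
  induction hd : (b : ℕ) - a generalizing a with
  | zero => rw [show a = b by ext; omega]
  | succ d ih =>
    have hlt : (a : ℕ) + 1 < n := by omega
    have hsucc : (⟨a + 1, hlt⟩ : Fin n) ∉ P := fun hP => by
      rcases (show (a : ℕ) + 1 < b ∨ (a : ℕ) + 1 = b by omega) with hb | hb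
      · exact h _ (by omega) hb (mem_union_left _ (mem_image_of_mem _ hP))
      · exact b.2 (by rwa [show (b : Fin n) = ⟨a + 1, hlt⟩ from Fin.ext hb.symm])
    let a' : ((P : Set (Fin n))ᶜ : Set (Fin n)) := ⟨⟨a + 1, hlt⟩, hsucc⟩
    have hadj : (pathRemainder P Q).Adj a a' := by
      refine (deleteEdges_adj ..).2 ⟨pathGraph_adj.2 (Or.inl rfl), fun hQ => ?_⟩
      exact h a le_rfl (by omega) (mem_union_right _ (mem_image.2 ⟨_, hQ, by simp [a']⟩))
    have ha' : (a' : ℕ) = a + 1 := rfl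
    exact hadj.reachable.trans (ih (by omega) (fun m hm => h m (by omega)) (by omega))

theorem val_sub_val_lt_of_cutsBelow_eq {k : ℕ} (hfail : FailureState (pathRemainder P Q) k)
    {a b : ((P : Set (Fin n))ᶜ : Set (Fin n))} (hab : (a : ℕ) ≤ b)
    (h : cutsBelow P Q a = cutsBelow P Q b) : (b : ℕ) - a < k := by
  have hreach := reachable_of_forall_notMem_cuts hab fun _ => notMem_cuts_of_cutsBelow_eq h
  exact (val_sub_val_le_dist hreach).trans_lt (hfail a b hreach)

theorem card_fiber_cutsBelow_le {k : ℕ} (hfail : FailureState (pathRemainder P Q) k) (t : ℕ) :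
    #{v : ((P : Set (Fin n))ᶜ : Set (Fin n)) | cutsBelow P Q v = t} ≤ k := by
  have hinj : Function.Injective fun v : ((P : Set (Fin n))ᶜ : Set (Fin n)) => (v : ℕ) :=
    Fin.val_injective.comp Subtype.val_injective
  rw [← card_image_of_injective _ hinj]
  refine card_le_of_forall_sub_lt ?_
  simp only [mem_image, mem_filter, mem_univ, true_and]
  rintro _ ⟨a, rfl, rfl⟩ _ ⟨b, hb, rfl⟩ hab
  exact val_sub_val_lt_of_cutsBelow_eq hfail hab hb.symm

theorem card_le_of_failureState {k : ℕ} (hfail : FailureState (pathRemainder P Q) k) :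
    Fintype.card ((P : Set (Fin n))ᶜ : Set (Fin n)) ≤ (#P + #Q + 1) * k := by
  rw [← card_univ, mul_comm, ← card_range (#P + #Q + 1)]
  refine card_le_mul_card_image_of_maps_to
    (f := fun v : ((P : Set (Fin n))ᶜ : Set (Fin n)) => cutsBelow P Q v)
    (fun v _ => mem_range.2 (Nat.lt_succ_of_le (cutsBelow_le _))) k
    fun t _ => card_fiber_cutsBelow_le hfail t

end pathRemainder

theorem pathGraph_mixed_bound_general (n k : ℕ)
    (P : Finset (Fin n))
    (Q : Finset (Sym2 ((P : Set (Fin n))ᶜ : Set (Fin n))))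
    (hfail : FailureState
      (((SimpleGraph.pathGraph n).induce ((P : Set (Fin n)))ᶜ).deleteEdges
        (Q : Set (Sym2 ((P : Set (Fin n))ᶜ : Set (Fin n))))) k) :
    n ≤ (P.card + Q.card + 1) * k + P.card := by
  have hsurvivors : Fintype.card ((P : Set (Fin n))ᶜ : Set (Fin n)) = n - #P := by
    rw [Fintype.card_compl_set, Fintype.card_fin]
    simp
  have hP : #P ≤ n := (card_le_univ P).trans_eq (Fintype.card_fin n)
  have := pathRemainder.card_le_of_failureState hfail
  omega

/-- If deleting `p` vertices and then `q` edges from the path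
graph on `n` vertices produces a failure state for `k`, then
`n ≤ (p + q + 1) k + p`. -/
theorem pathGraph_mixed_bound (n k : ℕ) (hn : 0 < n) (hk : 2 ≤ k)
    (P : Finset (Fin n))
    (Q : Finset (Sym2 ((P : Set (Fin n))ᶜ : Set (Fin n))))
    (hQ : (Q : Set (Sym2 ((P : Set (Fin n))ᶜ : Set (Fin n)))) ⊆
      ((SimpleGraph.pathGraph n).induce ((P : Set (Fin n)))ᶜ).edgeSet)
    (hfail : FailureState
      (((SimpleGraph.pathGraph n).induce ((P : Set (Fin n)))ᶜ).deleteEdges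
        (Q : Set (Sym2 ((P : Set (Fin n))ᶜ : Set (Fin n))))) k) :
    n ≤ (P.card + Q.card + 1) * k + P.card :=
  pathGraph_mixed_bound_general n k P Q hfail
end

section
/- Let a, b, x, y, p be nonnegative integers with a ≤ b, x + y = p, p < a, and y ≥ 1. Then (a − p)(b − 1) ≤ min{a − x, b − y} · (max{a − x, b − y} − 1); that is, if a − x ≤ b − y then (a − p)(b − 1) ≤ (a − x)(b − y − 1), and if b − y < a − x then (a − p)(b − 1) ≤ (b − y)(a − x − 1). -/
open SimpleGraph

/-- Arithmetic optimality of deleting all `p` vertices from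
the smaller side of a complete bipartite graph. -/
theorem bipartite_optimal_p_set (a b x y p : ℕ) (hab : a ≤ b)
    (hxy : x + y = p) (hpa : p < a) (hy : 1 ≤ y) :
    (a - p) * (b - 1) ≤ min (a - x) (b - y) * (max (a - x) (b - y) - 1) := by
  have hx : x ≤ p := by omega
  have h1 : p ≤ a := hpa.le
  have h2 : x ≤ a := by omega
  have h3 : y ≤ b := by omega
  have h4 : 1 ≤ b := by omega
  have h5 : 1 ≤ a - x := by omega
  have h6 : 1 ≤ b - y := by omega
  rcases le_or_gt (a - x) (b - y) with h | h
  · rw [min_eq_left h, max_eq_right h]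
    zify [h1, h2, h3, h4, h6] at *
    nlinarith
  · rw [min_eq_right h.le, max_eq_left h.le]
    zify [h1, h2, h3, h4, h5] at *
    nlinarith
end
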